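/- Define inductively the matching relation w ⊢ P ⇒ V for regular expression patterns P (with first-match rule for + and longest-match rule for *·, as in the paper's Figure 2). Then for all words w and patterns P: there exists V with w ⊢ P ⇒ V if and only if w ∈ L(P). -/

import Mathlib

/-- Regular expression patterns over an alphabet `A`. -/
inductive Pat (A : Type) : Type
  | eps : Pat A
  | ch : A → Pat A
  | plus : Pat A → Pat A → Pat A
  | cat : Pat A → Pat A → Pat A
  | star : Pat A → Pat A

/-- The language of a pattern (the usual regular-expression language). -/
def Pat.lang {A : Type} : Pat A → Language A
  | .eps => 1
  | .ch a => {[a]}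
  | .plus p q => p.lang + q.lang
  | .cat p q => p.lang * q.lang
  | .star p => KStar.kstar p.lang

/-- Node addresses in the syntax tree of a pattern: `[]` is the root, `1 :: n`
addresses node `n` in the left child, `2 :: n` in the right child. -/
abbrev Node := List ℕ

/-- Bindable nodes: nodes of the syntax tree having no `*`-labeled ancestor
(the root is always bindable; below a `star` nothing is bindable). -/
def Pat.Bindable {A : Type} : Pat A → Node → Prop
  | _, [] => True
  | .plus p _, 1 :: n => p.Bindable n
  | .plus _ q, 2 :: n => q.Bindable n
  | .cat p _, 1 :: n => p.Bindable n
  | .cat _ q, 2 :: n => q.Bindable n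
  | _, _ => False

/-- Associations: a map from node addresses to a matched subword (`some w`) or
`⊥` (`none`). -/
abbrev Assoc (A : Type) := Node → Option (List A)

/-- The association `[λ → w]` binding only the root. -/
def single {A : Type} (w : List A) : Assoc A :=
  fun n => if n = [] then some w else none

/-- `V + P₂`: push the associations of `V` into the left branch of a
disjunction; all nodes of the right branch get `⊥`. -/
def orL {A : Type} (V : Assoc A) : Assoc A
  | [] => V []
  | 1 :: m => V m
  | _ => none

/-- `P₁ + V`: push the associations of `V` into the right branch of a
disjunction; all nodes of the left branch get `⊥`. -/
def orR {A : Type} (V : Assoc A) : Assoc A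
  | [] => V []
  | 2 :: m => V m
  | _ => none

/-- `V₁ · V₂`: the association for a concatenation node. -/
def catA {A : Type} (V₁ V₂ : Assoc A) : Assoc A
  | [] => match V₁ [], V₂ [] with
          | some u, some v => some (u ++ v)
          | _, _ => none
  | 1 :: m => V₁ m
  | 2 :: m => V₂ m
  | _ => none

mutual
/-- The matching relation `w ⊢ P ⇒ V` of the paper's Figure 2, with the
first-match policy for `+` (rules Or2/COr2) and the longest-match policy for
Kleene star in a concatenation (rule CKleene). -/
inductive Match {A : Type} : List A → Pat A → Assoc A → Prop
  | empty : Match [] .eps (single [])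
  | lab (a : A) : Match [a] (.ch a) (single [a])
  | kleeneEmpty (P : Pat A) : Match [] (.star P) (single [])
  | kleeneClosure {w₁ w₂ : List A} {P : Pat A} {V₁ V₂ : Assoc A} :
      Match w₁ P V₁ → Match w₂ (.star P) V₂ → w₁ ≠ [] →
      Match (w₁ ++ w₂) (.star P) (single (w₁ ++ w₂))
  | or1 {w : List A} {P₁ P₂ : Pat A} {V : Assoc A} :
      Match w P₁ V → Match w (.plus P₁ P₂) (orL V)
  | or2 {w : List A} {P₁ P₂ : Pat A} {V : Assoc A} :
      Match w P₂ V → w ∉ P₁.lang → Match w (.plus P₁ P₂) (orR V)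
  | celem {w₁ w₂ : List A} {P₁ P₂ : Pat A} {V₁ V₂ : Assoc A} :
      CMatch w₁ w₂ P₁ P₂ V₁ V₂ → Match (w₁ ++ w₂) (.cat P₁ P₂) (catA V₁ V₂)

/-- The auxiliary relation `(w₁, w₂) ⊢ P₁ · P₂ ⇒ (V₁, V₂)`: when matching
`w₁w₂` against `P₁ · P₂`, pattern `P₁` matches `w₁` yielding `V₁` and `P₂`
matches `w₂` yielding `V₂`. -/
inductive CMatch {A : Type} : List A → List A → Pat A → Pat A → Assoc A → Assoc A → Prop
  | cempty {w : List A} {P : Pat A} {V₂ : Assoc A} :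
      Match w P V₂ → CMatch [] w .eps P (single []) V₂
  | clab {a : A} {w : List A} {P : Pat A} {V₁ V₂ : Assoc A} :
      Match [a] (.ch a) V₁ → Match w P V₂ → CMatch [a] w (.ch a) P V₁ V₂
  | cor1 {w₁ w₂ : List A} {P₁ P₂ P₃ : Pat A} {V₁ V₂ : Assoc A} :
      CMatch w₁ w₂ P₁ P₃ V₁ V₂ →
      CMatch w₁ w₂ (.plus P₁ P₂) P₃ (orL V₁) V₂
  | cor2 {w₁ w₂ : List A} {P₁ P₂ P₃ : Pat A} {V₁ V₂ : Assoc A} :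
      CMatch w₁ w₂ P₂ P₃ V₁ V₂ → w₁ ++ w₂ ∉ (Pat.cat P₁ P₃).lang →
      CMatch w₁ w₂ (.plus P₁ P₂) P₃ (orR V₁) V₂
  | ccon {w₁ w₂ w₃ : List A} {P₁ P₂ P₃ : Pat A} {V₁ V₂ V₃ W : Assoc A} :
      CMatch w₁ (w₂ ++ w₃) P₁ (.cat P₂ P₃) V₁ W →
      CMatch w₂ w₃ P₂ P₃ V₂ V₃ →
      CMatch (w₁ ++ w₂) w₃ (.cat P₁ P₂) P₃ (catA V₁ V₂) V₃
  | ckleene {w₁ w₂ : List A} {P₁ P₂ : Pat A} {V₁ V₂ : Assoc A} :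
      Match w₁ (.star P₁) V₁ → Match w₂ P₂ V₂ →
      (¬ ∃ w₃ w₄, w₃ ≠ [] ∧ w₂ = w₃ ++ w₄ ∧
        w₁ ++ w₃ ∈ (Pat.star P₁).lang ∧ w₄ ∈ P₂.lang) →
      CMatch w₁ w₂ (.star P₁) P₂ V₁ V₂
end

/-- The type of node `n` of pattern `P` relative to a context language `C`:
all subwords that `n` can be associated with when matching a word of `C`
against `P`. -/
def typeOf {A : Type} (n : Node) (P : Pat A) (C : Set (List A)) : Set (List A) :=
  {w | ∃ w' ∈ C, ∃ V, Match w' P V ∧ V n = some w}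

/-!
Soundness is an induction on derivations. For completeness, the disambiguation side conditions
only decide which derivation is built, never whether one exists: Or2/COr2 apply exactly when
Or1/COr1 cannot, and for `P₁* · P₂` the split whose star part is longest satisfies the side
condition of CKleene. Since rule CCon rewrites `(Q₁ · Q₂) · P` as `Q₁ · (Q₂ · P)`, completeness
of the auxiliary relation is proved by induction on the left factor, for all right factors at
once, together with completeness of the matching relation itself.
-/

theorem Language.exists_longest_split_of_mem_mul {α : Type*} {L M : Language α} {w : List α}
    (h : w ∈ L * M) :
    ∃ u v, w = u ++ v ∧ u ∈ L ∧ v ∈ M ∧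
      ¬ ∃ x y, x ≠ [] ∧ v = x ++ y ∧ u ++ x ∈ L ∧ y ∈ M := by
  classical
  have hex : ∃ n, ∃ u v, w = u ++ v ∧ u ∈ L ∧ v ∈ M ∧ v.length = n := by
    obtain ⟨u, hu, v, hv, rfl⟩ := Language.mem_mul.mp h
    exact ⟨_, u, v, rfl, hu, hv, rfl⟩
  obtain ⟨u, v, hw, hu, hv, hlen⟩ := Nat.find_spec hex
  refine ⟨u, v, hw, hu, hv, ?_⟩
  rintro ⟨x, y, hx, rfl, hux, hy⟩
  refine Nat.find_min hex (m := y.length) ?_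
    ⟨u ++ x, y, by rw [hw, List.append_assoc], hux, hy, rfl⟩
  rw [← hlen, List.length_append, Nat.lt_add_left_iff_pos, List.length_pos_iff]
  exact hx

mutual

theorem Match.mem_lang {A : Type} {w : List A} {P : Pat A} {V : Assoc A} :
    Match w P V → w ∈ P.lang
  | .empty => rfl
  | .lab _ => rfl
  | .kleeneEmpty _ => Language.nil_mem_kstar _
  | .kleeneClosure h₁ h₂ _ =>
    mul_kstar_le_kstar (α := Language A) (Language.append_mem_mul h₁.mem_lang h₂.mem_lang)
  | .or1 h => Or.inl h.mem_lang
  | .or2 h _ => Or.inr h.mem_lang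
  | .celem h => Language.append_mem_mul h.mem_lang.1 h.mem_lang.2

theorem CMatch.mem_lang {A : Type} {w₁ w₂ : List A} {P₁ P₂ : Pat A} {V₁ V₂ : Assoc A} :
    CMatch w₁ w₂ P₁ P₂ V₁ V₂ → w₁ ∈ P₁.lang ∧ w₂ ∈ P₂.lang
  | .cempty h => ⟨rfl, h.mem_lang⟩
  | .clab h₁ h₂ => ⟨h₁.mem_lang, h₂.mem_lang⟩
  | .cor1 h => ⟨Or.inl h.mem_lang.1, h.mem_lang.2⟩
  | .cor2 h _ => ⟨Or.inr h.mem_lang.1, h.mem_lang.2⟩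
  | .ccon h₁ h₂ => ⟨Language.append_mem_mul h₁.mem_lang.1 h₂.mem_lang.1, h₂.mem_lang.2⟩
  | .ckleene h₁ h₂ _ => ⟨h₁.mem_lang, h₂.mem_lang⟩

end

namespace Pat

variable {A : Type}

def MatchComplete (P : Pat A) : Prop :=
  ∀ w ∈ P.lang, ∃ V, Match w P V

def CMatchComplete (P₁ P₂ : Pat A) : Prop :=
  ∀ w ∈ (cat P₁ P₂).lang, ∃ w₁ w₂ V₁ V₂, w = w₁ ++ w₂ ∧ CMatch w₁ w₂ P₁ P₂ V₁ V₂

theorem matchComplete_eps : (eps : Pat A).MatchComplete := by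
  rintro w rfl
  exact ⟨_, .empty⟩

theorem matchComplete_ch (a : A) : (ch a).MatchComplete := by
  rintro w rfl
  exact ⟨_, .lab a⟩

theorem MatchComplete.plus {P₁ P₂ : Pat A} (h₁ : P₁.MatchComplete) (h₂ : P₂.MatchComplete) :
    (plus P₁ P₂).MatchComplete := by
  intro w hw
  by_cases hw₁ : w ∈ P₁.lang
  · obtain ⟨V, hV⟩ := h₁ w hw₁
    exact ⟨_, .or1 hV⟩
  · obtain ⟨V, hV⟩ := h₂ w (hw.resolve_left hw₁)
    exact ⟨_, .or2 hV hw₁⟩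

theorem MatchComplete.star {P : Pat A} (h : P.MatchComplete) : (star P).MatchComplete := by
  intro w hw
  obtain ⟨S, rfl, hS⟩ := Language.mem_kstar_iff_exists_nonempty.mp hw
  clear hw
  induction S with
  | nil => exact ⟨_, .kleeneEmpty P⟩
  | cons u S ih =>
    obtain ⟨hu, hu_ne⟩ := hS u List.mem_cons_self
    have hS' : ∀ y ∈ S, y ∈ P.lang ∧ y ≠ [] := fun y hy => hS y (List.mem_cons_of_mem _ hy)
    obtain ⟨V₁, hV₁⟩ := h u hu
    obtain ⟨V₂, hV₂⟩ := ih hS'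
    exact ⟨_, .kleeneClosure hV₁ hV₂ hu_ne⟩

theorem CMatchComplete.matchComplete_cat {P₁ P₂ : Pat A} (h : CMatchComplete P₁ P₂) :
    (cat P₁ P₂).MatchComplete := by
  intro w hw
  obtain ⟨w₁, w₂, V₁, V₂, rfl, hc⟩ := h w hw
  exact ⟨_, .celem hc⟩

theorem cMatchComplete_eps {P : Pat A} (h : P.MatchComplete) : CMatchComplete eps P := by
  intro w hw
  rw [Pat.lang, Pat.lang, one_mul] at hw
  obtain ⟨V, hV⟩ := h w hw
  exact ⟨[], w, _, _, rfl, .cempty hV⟩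

theorem cMatchComplete_ch (a : A) {P : Pat A} (h : P.MatchComplete) : CMatchComplete (ch a) P := by
  intro w hw
  obtain ⟨_, rfl, v, hv, rfl⟩ := Language.mem_mul.mp hw
  obtain ⟨V, hV⟩ := h v hv
  exact ⟨[a], v, _, _, rfl, .clab (.lab a) hV⟩

theorem CMatchComplete.plus {Q₁ Q₂ P : Pat A} (h₁ : CMatchComplete Q₁ P)
    (h₂ : CMatchComplete Q₂ P) : CMatchComplete (plus Q₁ Q₂) P := by
  intro w hw
  by_cases hw₁ : w ∈ (cat Q₁ P).lang
  · obtain ⟨w₁, w₂, V₁, V₂, rfl, hc⟩ := h₁ w hw₁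
    exact ⟨w₁, w₂, _, _, rfl, .cor1 hc⟩
  · have hw₂ : w ∈ (cat Q₂ P).lang := by
      rw [Pat.lang, Pat.lang, add_mul] at hw
      exact hw.resolve_left hw₁
    obtain ⟨w₁, w₂, V₁, V₂, rfl, hc⟩ := h₂ w hw₂
    exact ⟨w₁, w₂, _, _, rfl, .cor2 hc hw₁⟩

theorem CMatchComplete.cat {Q₁ Q₂ P : Pat A} (h₁ : CMatchComplete Q₁ (cat Q₂ P))
    (h₂ : CMatchComplete Q₂ P) : CMatchComplete (cat Q₁ Q₂) P := by
  intro w hw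
  rw [Pat.lang, Pat.lang, mul_assoc] at hw
  obtain ⟨u, v, V₁, W, rfl, hc₁⟩ := h₁ w hw
  obtain ⟨w₂, w₃, V₂, V₃, rfl, hc₂⟩ := h₂ v hc₁.mem_lang.2
  exact ⟨u ++ w₂, w₃, _, _, (List.append_assoc ..).symm, .ccon hc₁ hc₂⟩

theorem cMatchComplete_star {Q P : Pat A} (hQ : (star Q).MatchComplete) (hP : P.MatchComplete) :
    CMatchComplete (star Q) P := by
  intro w hw
  obtain ⟨u, v, rfl, hu, hv, hmax⟩ := Language.exists_longest_split_of_mem_mul hw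
  obtain ⟨V₁, hV₁⟩ := hQ u hu
  obtain ⟨V₂, hV₂⟩ := hP v hv
  exact ⟨u, v, _, _, rfl, .ckleene hV₁ hV₂ hmax⟩

theorem matchComplete_and_cMatchComplete (P₁ : Pat A) :
    P₁.MatchComplete ∧ ∀ P₂, P₂.MatchComplete → CMatchComplete P₁ P₂ := by
  induction P₁ with
  | eps => exact ⟨matchComplete_eps, fun _ => cMatchComplete_eps⟩
  | ch a => exact ⟨matchComplete_ch a, fun _ => cMatchComplete_ch a⟩
  | plus Q₁ Q₂ ih₁ ih₂ =>
    exact ⟨ih₁.1.plus ih₂.1, fun P hP => (ih₁.2 P hP).plus (ih₂.2 P hP)⟩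
  | cat Q₁ Q₂ ih₁ ih₂ =>
    refine ⟨(ih₁.2 Q₂ ih₂.1).matchComplete_cat, fun P hP => ?_⟩
    have h₂ := ih₂.2 P hP
    exact (ih₁.2 _ h₂.matchComplete_cat).cat h₂
  | star Q ih => exact ⟨ih.1.star, fun _ => cMatchComplete_star ih.1.star⟩

end Pat

/-- For all words `w` and patterns `P`, there exists `V` with
`w ⊢ P ⇒ V` if and only if `w ∈ L(P)`. -/
theorem match_iff_mem_lang {A : Type} (w : List A) (P : Pat A) :
    (∃ V, Match w P V) ↔ w ∈ P.lang :=
  ⟨fun ⟨_, h⟩ => h.mem_lang, (P.matchComplete_and_cMatchComplete.1 w ·)⟩
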